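/- Let C : (0,∞) → ℝ be nonincreasing with C_a ≤ 0 for all a > 0, and suppose there exist a > 0 and δ > 0 with C_a < 0 such that C_{(1+t)c} ≤ (1+t) C_c for all t ∈ [0,δ) and all c ∈ [a, λa], where λ > 1. Then C_{λa} ≤ λ C_a. -/

import Mathlib

/-! Fix a ratio `r = 1 + δ/2`. Iterating the local inequality with `t = δ/2` gives
`C (r^m a) ≤ r^m C a` as long as `r^m ≤ λ`; choosing `m` with `r^m ≤ λ < r^(m+1)`, one last
application with `t = λ / r^m - 1 ∈ [0, δ/2)` at `c = r^m a` reaches `λ a`. -/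

theorem apply_pow_mul_le_pow_mul_of_step {C : ℝ → ℝ} {r a b : ℝ} (hr : 1 ≤ r) (ha : 0 ≤ a)
    (hstep : ∀ c, a ≤ c → c ≤ b → C (r * c) ≤ r * C c) :
    ∀ k : ℕ, r ^ k * a ≤ b → C (r ^ k * a) ≤ r ^ k * C a
  | 0, _ => by simp
  | k + 1, hk => by
    have hle : r ^ k * a ≤ r ^ (k + 1) * a :=
      mul_le_mul_of_nonneg_right (pow_le_pow_right₀ hr k.le_succ) ha
    have hak : a ≤ r ^ k * a := le_mul_of_one_le_left ha (one_le_pow₀ hr)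
    have ih := apply_pow_mul_le_pow_mul_of_step hr ha hstep k (hle.trans hk)
    calc C (r ^ (k + 1) * a) = C (r * (r ^ k * a)) := by rw [pow_succ', mul_assoc]
      _ ≤ r * C (r ^ k * a) := hstep _ hak (hle.trans hk)
      _ ≤ r * (r ^ k * C a) := mul_le_mul_of_nonneg_left ih (zero_le_one.trans hr)
      _ = r ^ (k + 1) * C a := by rw [pow_succ', mul_assoc]

theorem apply_mul_le_mul_of_local_subhomogeneous {C : ℝ → ℝ} {a b δ : ℝ} (ha : 0 ≤ a)
    (hδ : 0 < δ)
    (hloc : ∀ t c : ℝ, 0 ≤ t → t < δ → a ≤ c → c ≤ b → C ((1 + t) * c) ≤ (1 + t) * C c)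
    {μ : ℝ} (hμ : 1 ≤ μ) (hμb : μ * a ≤ b) :
    C (μ * a) ≤ μ * C a := by
  set r := 1 + δ / 2
  have hr : 1 < r := by simp only [r]; linarith
  obtain ⟨m, hm_le, hm_lt⟩ := exists_nat_pow_near hμ hr
  have hrm : 0 < r ^ m := by positivity
  have hrma_le : r ^ m * a ≤ μ * a := mul_le_mul_of_nonneg_right hm_le ha
  have hpow : C (r ^ m * a) ≤ r ^ m * C a :=
    apply_pow_mul_le_pow_mul_of_step hr.le ha
      (fun c hac hcb => hloc (δ / 2) c (by positivity) (by linarith) hac hcb) m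
      (hrma_le.trans hμb)
  set s := μ / r ^ m
  have hs_one : 1 ≤ s := (one_le_div hrm).mpr hm_le
  have hs_lt : s < r := by rwa [div_lt_iff₀ hrm, ← pow_succ']
  have hsμ : s * r ^ m = μ := div_mul_cancel₀ μ hrm.ne'
  have hlast := hloc (s - 1) (r ^ m * a) (by linarith) (by simp only [r] at hs_lt; linarith)
    (le_mul_of_one_le_left ha (one_le_pow₀ hr.le)) (hrma_le.trans hμb)
  rw [add_sub_cancel] at hlast
  calc C (μ * a) = C (s * (r ^ m * a)) := by rw [← mul_assoc, hsμ]
    _ ≤ s * C (r ^ m * a) := hlast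
    _ ≤ s * (r ^ m * C a) := mul_le_mul_of_nonneg_left hpow (by linarith)
    _ = μ * C a := by rw [← mul_assoc, hsμ]

theorem stmt_4_general (C : ℝ → ℝ)
    (a δ lam : ℝ) (ha : 0 < a) (hδ : 0 < δ) (hlam : 1 < lam)
    (hloc : ∀ t c : ℝ, 0 ≤ t → t < δ → a ≤ c → c ≤ lam * a →
      C ((1 + t) * c) ≤ (1 + t) * C c) :
    C (lam * a) ≤ lam * C a :=
  apply_mul_le_mul_of_local_subhomogeneous ha.le hδ hloc hlam.le le_rfl

theorem stmt_4 (C : ℝ → ℝ)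
    (hmono : ∀ a b : ℝ, 0 < a → a ≤ b → C b ≤ C a)
    (hnonpos : ∀ a : ℝ, 0 < a → C a ≤ 0)
    (a δ lam : ℝ) (ha : 0 < a) (hδ : 0 < δ) (hCa : C a < 0) (hlam : 1 < lam)
    (hloc : ∀ t c : ℝ, 0 ≤ t → t < δ → a ≤ c → c ≤ lam * a →
      C ((1 + t) * c) ≤ (1 + t) * C c) :
    C (lam * a) ≤ lam * C a :=
  stmt_4_general C a δ lam ha hδ hlam hloc
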